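/- arXiv:1404.5184 — 3 statements merged into one kernel-verified Lean document; each statement's English description precedes it below -/
import Mathlib

section
/- Let R be a tolerance on U and x ∈ U. If a ∈ R(x) implies R(x) ⊆ R(a) for all a, then R(x) is an R-block, and conversely. -/
variable {α : Type*}

/-- The `R`-neighbourhood of `x`. -/
def nbhd (R : α → α → Prop) (x : α) : Set α := {y | R x y}

/-- A nonempty set all of whose pairs are related: an `R`-preblock. -/
def IsPreblock (R : α → α → Prop) (X : Set α) : Prop :=
  X.Nonempty ∧ ∀ a ∈ X, ∀ b ∈ X, R a b

/-- An `R`-block: a maximal `R`-preblock. -/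
def IsBlock (R : α → α → Prop) (B : Set α) : Prop :=
  IsPreblock R B ∧ ∀ X, IsPreblock R X → B ⊆ X → B = X

/-- A covering of the universe by nonempty sets. -/
def IsCovering (H : Set (Set α)) : Prop :=
  (∀ X ∈ H, X.Nonempty) ∧ ⋃₀ H = Set.univ

/-- An irredundant covering: no member can be removed. -/
def IsIrredundant (H : Set (Set α)) : Prop :=
  IsCovering H ∧ ∀ X ∈ H, ¬ IsCovering (H \ {X})

/-- The family `H` induces the relation `R`. -/
def Induces (H : Set (Set α)) (R : α → α → Prop) : Prop :=
  ∀ a b, R a b ↔ ∃ X ∈ H, a ∈ X ∧ b ∈ X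

/-- Minimal element of a quasiorder. -/
def QMinimal (le : α → α → Prop) (m : α) : Prop := ∀ y, le y m → le m y

/-- Upset of an element. -/
def upset (le : α → α → Prop) (m : α) : Set α := {y | le m y}

/-- The tolerance `≈ = ≳ ∘ ≲` determined by a quasiorder. -/
def approx (le : α → α → Prop) (x y : α) : Prop := ∃ a, le a x ∧ le a y

/-- Bounded by minimal elements. -/
def BoundedByMinimals (le : α → α → Prop) : Prop :=
  ∀ x, ∃ m, QMinimal le m ∧ le m x

/-- The quasiorder `≲_R` determined by a tolerance. -/
def tolLe (R : α → α → Prop) (x y : α) : Prop := nbhd R x ⊆ nbhd R y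

/-- Helly number 2 for a quasiordered set. -/
def Helly2 (le : α → α → Prop) : Prop :=
  ∀ A : Set α, A.Nonempty → (∀ x ∈ A, ∀ y ∈ A, ∃ a, le a x ∧ le a y) →
    ∃ a, ∀ x ∈ A, le a x

/-- A canonical base: a family of `R`-blocks inducing `R`, no member removable. -/
def CanonicalBase (R : α → α → Prop) (K : Set (Set α)) : Prop :=
  (∀ X ∈ K, IsBlock R X) ∧ Induces K R ∧ ∀ X ∈ K, ¬ Induces (K \ {X}) R

theorem IsPreblock.subset_nbhd {R : α → α → Prop} {X : Set α} (hX : IsPreblock R X) {x : α}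
    (hx : x ∈ X) : X ⊆ nbhd R x :=
  fun _ hy => hX.2 x hx _ hy

theorem isPreblock_nbhd_iff {R : α → α → Prop} {x : α} (hx : R x x) :
    IsPreblock R (nbhd R x) ↔ ∀ a ∈ nbhd R x, nbhd R x ⊆ nbhd R a :=
  ⟨fun h a ha _ hb => h.2 a ha _ hb, fun h => ⟨⟨x, hx⟩, fun a ha _ hb => h a ha hb⟩⟩

theorem IsPreblock.isBlock_nbhd {R : α → α → Prop} {x : α} (h : IsPreblock R (nbhd R x))
    (hx : R x x) : IsBlock R (nbhd R x) :=
  ⟨h, fun _ hX hsub => hsub.antisymm (hX.subset_nbhd (hsub hx))⟩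

theorem stmt1_general (R : α → α → Prop) (hrefl : Reflexive R) (x : α) :
    (∀ a ∈ nbhd R x, nbhd R x ⊆ nbhd R a) ↔ IsBlock R (nbhd R x) := by
  rw [← isPreblock_nbhd_iff (hrefl x)]
  exact ⟨fun h => h.isBlock_nbhd (hrefl x), fun h => h.1⟩

theorem stmt1 (R : α → α → Prop) (hrefl : Reflexive R) (hsymm : Symmetric R) (x : α) :
    (∀ a ∈ nbhd R x, nbhd R x ⊆ nbhd R a) ↔ IsBlock R (nbhd R x) :=
  stmt1_general R hrefl x
end

section
/- Let R be a tolerance induced by a family H of R-blocks. Then H is an irredundant covering of U if and only if H is the unique canonical base of R and every member of H is an R-neighbourhood R(x) for some x ∈ U. -/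
variable {α : Type*}

/-! A member `X` of a covering is indispensable exactly when it has a private point `x`, lying
in no other member. If the blocks of `H` induce `R`, every `y ∈ R(x)` shares a member of `H` with
`x`, which must be `X`; hence `X = R(x)`. Conversely every block through `x` lies in `R(x)`, so a
block of the form `R(x)` is the only block through `x`: it belongs to every family of blocks
inducing `R` and can be dropped from none. -/

namespace IsPreblock

variable {R : α → α → Prop} {X : Set α}

theorem subset_nbhd_s14 (hX : IsPreblock R X) {x : α} (hx : x ∈ X) : X ⊆ nbhd R x :=
  fun y hy => hX.2 x hx y hy

end IsPreblock

namespace IsBlock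

variable {R : α → α → Prop} {B : Set α}

theorem eq_nbhd_of_mem (hB : IsBlock R B) {x : α} (hx : x ∈ B) (hnbhd : IsPreblock R (nbhd R x)) :
    B = nbhd R x :=
  hB.2 _ hnbhd (hB.1.subset_nbhd_s14 hx)

end IsBlock

namespace Induces

variable {R : α → α → Prop} {H : Set (Set α)}

theorem exists_mem (hind : Induces H R) (hrefl : Reflexive R) (x : α) : ∃ X ∈ H, x ∈ X := by
  obtain ⟨X, hX, hx, -⟩ := (hind x x).1 (hrefl x)
  exact ⟨X, hX, hx⟩

theorem isCovering (hind : Induces H R) (hrefl : Reflexive R) (hne : ∀ X ∈ H, X.Nonempty) :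
    IsCovering H :=
  ⟨hne,
    Set.eq_univ_of_forall fun x => Set.mem_sUnion.2 (hind.exists_mem hrefl x)⟩

theorem eq_nbhd_of_unique_mem (hind : Induces H R) {X : Set α} (hX : IsPreblock R X) {x : α}
    (hx : x ∈ X) (huniq : ∀ Y ∈ H, x ∈ Y → Y = X) : X = nbhd R x := by
  refine hX.subset_nbhd_s14 hx |>.antisymm fun y hy => ?_
  obtain ⟨Y, hY, hxY, hyY⟩ := (hind x y).1 hy
  exact huniq Y hY hxY ▸ hyY

theorem nbhd_mem (hind : Induces H R) (hrefl : Reflexive R) (hblocks : ∀ X ∈ H, IsBlock R X)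
    {x : α} (hnbhd : IsPreblock R (nbhd R x)) : nbhd R x ∈ H := by
  obtain ⟨X, hX, hx⟩ := hind.exists_mem hrefl x
  exact (hblocks X hX).eq_nbhd_of_mem hx hnbhd ▸ hX

theorem of_subset_of_subset {K L : Set (Set α)} (hH : Induces H R) (hK : Induces K R)
    (hHL : H ⊆ L) (hLK : L ⊆ K) : Induces L R := fun a b =>
  ⟨fun hab => let ⟨X, hX, hX'⟩ := (hH a b).1 hab; ⟨X, hHL hX, hX'⟩,
    fun ⟨X, hX, hX'⟩ => (hK a b).2 ⟨X, hLK hX, hX'⟩⟩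

end Induces

theorem CanonicalBase.eq_of_subset {R : α → α → Prop} {H K : Set (Set α)}
    (hK : CanonicalBase R K) (hH : Induces H R) (hHK : H ⊆ K) : K = H := by
  refine Set.Subset.antisymm (fun X hXK => ?_) hHK
  by_contra hXH
  exact hK.2.2 X hXK <| hH.of_subset_of_subset hK.2.1
    (fun Y hY => ⟨hHK hY, fun hYX => hXH (hYX ▸ hY)⟩) Set.sdiff_subset

theorem not_induces_diff_singleton {R : α → α → Prop} {H : Set (Set α)} (hrefl : Reflexive R)
    {X : Set α} {x : α} (huniq : ∀ Y ∈ H, x ∈ Y → Y = X) : ¬ Induces (H \ {X}) R := fun hind =>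
  let ⟨Y, ⟨hY, hYX⟩, hxY⟩ := hind.exists_mem hrefl x
  hYX (huniq Y hY hxY)

namespace IsCovering

variable {H : Set (Set α)}

theorem not_isCovering_diff_singleton_iff (hcov : IsCovering H) (X : Set α) :
    ¬ IsCovering (H \ {X}) ↔ ∃ x ∈ X, ∀ Y ∈ H, x ∈ Y → Y = X := by
  constructor
  · intro hnc
    by_contra! hshared
    refine hnc ⟨fun Y hY => hcov.1 Y hY.1, Set.eq_univ_of_forall fun a => ?_⟩
    obtain ⟨Z, hZ, haZ⟩ := Set.mem_sUnion.1 (hcov.2 ▸ Set.mem_univ a)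
    by_cases hZX : Z = X
    · obtain ⟨Y, hY, haY, hYX⟩ := hshared a (hZX ▸ haZ)
      exact ⟨Y, ⟨hY, hYX⟩, haY⟩
    · exact ⟨Z, ⟨hZ, hZX⟩, haZ⟩
  · rintro ⟨x, -, huniq⟩ hc
    obtain ⟨Y, ⟨hY, hYX⟩, hxY⟩ := Set.mem_sUnion.1 (hc.2 ▸ Set.mem_univ x)
    exact hYX (huniq Y hY hxY)

theorem isIrredundant_iff (hcov : IsCovering H) :
    IsIrredundant H ↔ ∀ X ∈ H, ∃ x ∈ X, ∀ Y ∈ H, x ∈ Y → Y = X := by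
  simp only [IsIrredundant, hcov, true_and, hcov.not_isCovering_diff_singleton_iff]

end IsCovering

theorem stmt14_general (R : α → α → Prop) (hrefl : Reflexive R)
    (H : Set (Set α)) (hblocks : ∀ X ∈ H, IsBlock R X) (hind : Induces H R) :
    IsIrredundant H ↔
      ((CanonicalBase R H ∧ ∀ K : Set (Set α), CanonicalBase R K → K = H) ∧
        ∀ X ∈ H, ∃ x, X = nbhd R x) := by
  rw [(hind.isCovering hrefl fun X hX => (hblocks X hX).1.1).isIrredundant_iff]
  constructor
  · intro hpriv
    choose pt hpt huniq using hpriv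
    have hnbhd : ∀ X (hX : X ∈ H), X = nbhd R (pt X hX) := fun X hX =>
      hind.eq_nbhd_of_unique_mem (hblocks X hX).1 (hpt X hX) (huniq X hX)
    have hbase : CanonicalBase R H :=
      ⟨hblocks, hind, fun X hX => not_induces_diff_singleton hrefl (huniq X hX)⟩
    refine ⟨⟨hbase, fun K hK => hK.eq_of_subset hind fun X hX => ?_⟩, fun X hX => ⟨_, hnbhd X hX⟩⟩
    rw [hnbhd X hX]
    exact hK.2.1.nbhd_mem hrefl hK.1 (hnbhd X hX ▸ (hblocks X hX).1)
  · rintro ⟨-, hnbhd⟩ X hX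
    obtain ⟨x, rfl⟩ := hnbhd X hX
    exact ⟨x, hrefl x, fun Y hY hxY => (hblocks Y hY).eq_nbhd_of_mem hxY (hblocks _ hX).1⟩

theorem stmt14 (R : α → α → Prop) (hrefl : Reflexive R) (hsymm : Symmetric R)
    (H : Set (Set α)) (hblocks : ∀ X ∈ H, IsBlock R X) (hind : Induces H R) :
    IsIrredundant H ↔
      ((CanonicalBase R H ∧ ∀ K : Set (Set α), CanonicalBase R K → K = H) ∧
        ∀ X ∈ H, ∃ x, X = nbhd R x) :=
  stmt14_general R hrefl H hblocks hind
end

section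
/- Let (U, ≲) be a quasiordered set with Helly number 2 (every preblock of ≈ = ≳∘≲ has a lower bound). Then the blocks of the tolerance ≈ are exactly the upsets ↑m of minimal elements m of (U, ≲). -/
/-!
By Helly number 2 every `≈`-preblock `X` has a lower bound `a`, so `X ⊆ ↑a`, and `↑a` is itself a
preblock. Hence every block is some `↑a`, and `↑m` is a block iff no `↑y` with `y ≲ m` is strictly
larger, i.e. iff `m` is minimal.
-/

variable {α : Type*}

section

variable {le : α → α → Prop}

lemma isPreblock_approx_upset (hrefl : Reflexive le) (m : α) :
    IsPreblock (approx le) (upset le m) :=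
  ⟨⟨m, hrefl m⟩, fun _ hx _ hy => ⟨m, hx, hy⟩⟩

lemma upset_subset_upset (htrans : Transitive le) {a b : α} (hab : le a b) :
    upset le b ⊆ upset le a :=
  fun _ hx => htrans hab hx

lemma IsBlock.eq_upset_of_le (hrefl : Reflexive le) {B : Set α} (hB : IsBlock (approx le) B)
    {a : α} (ha : ∀ x ∈ B, le a x) : B = upset le a :=
  hB.2 _ (isPreblock_approx_upset hrefl a) ha

lemma qMinimal_of_isBlock_upset (hrefl : Reflexive le) (htrans : Transitive le) {a : α}
    (ha : IsBlock (approx le) (upset le a)) : QMinimal le a := by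
  intro y hya
  have hay : upset le a = upset le y := ha.eq_upset_of_le hrefl (upset_subset_upset htrans hya)
  show y ∈ upset le a
  rw [hay]
  exact hrefl y

lemma isBlock_approx_upset (hrefl : Reflexive le) (htrans : Transitive le) (hh : Helly2 le)
    {m : α} (hm : QMinimal le m) : IsBlock (approx le) (upset le m) := by
  refine ⟨isPreblock_approx_upset hrefl m, fun X ⟨hXne, hXpair⟩ hmX => ?_⟩
  obtain ⟨a, ha⟩ := hh X hXne hXpair
  have hma : le m a := hm a (ha m (hmX (hrefl m)))
  exact hmX.antisymm fun x hx => htrans hma (ha x hx)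

end

theorem stmt15 (le : α → α → Prop) (hrefl : Reflexive le) (htrans : Transitive le)
    (hh : Helly2 le) (B : Set α) :
    IsBlock (approx le) B ↔ ∃ m, QMinimal le m ∧ B = upset le m := by
  constructor
  · intro hB
    obtain ⟨a, ha⟩ := hh B hB.1.1 hB.1.2
    have hBa : B = upset le a := hB.eq_upset_of_le hrefl ha
    exact ⟨a, qMinimal_of_isBlock_upset hrefl htrans (hBa ▸ hB), hBa⟩
  · rintro ⟨m, hm, rfl⟩
    exact isBlock_approx_upset hrefl htrans hh hm
end
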